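/- Define v(n,k) := 4(n+1)(n−k−1)(n(3k²+5k−4) − (k³+k²+2k+8))/(n(n−1)²(k+1)²(k+2)²(k+3)(k+4)) and c(n,k1,k2) := −8(n+1)(3n−k2+2)(n−k2−1)/(n(n−1)²(k1+1)(k1+2)(k2+1)(k2+2)(k2+3)(k2+4)). Then for all integers n ≥ 4 and 1 ≤ i ≤ n−1: (1/i²)·[ ∑_{k=i}^{n−1} v(n,k) + 2·∑_{i ≤ k1 < k2 ≤ n−1} c(n,k1,k2) ] = 4(n+1)(n−i)(n−i−1)(i−1)/(n(n−1)²·i²(i+1)²(i+2)(i+3)). -/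

import Mathlib

/-- `v(n,k) = Var(E[1_k^{(n)} | 𝒴_n])`. -/
noncomputable def vVar (n k : ℝ) : ℝ :=
  4 * (n + 1) * (n - k - 1) * (n * (3 * k ^ 2 + 5 * k - 4) - (k ^ 3 + k ^ 2 + 2 * k + 8)) /
    (n * (n - 1) ^ 2 * (k + 1) ^ 2 * (k + 2) ^ 2 * (k + 3) * (k + 4))

/-- `c(n,k1,k2) = Cov(E[1_{k1}^{(n)} | 𝒴_n], E[1_{k2}^{(n)} | 𝒴_n])`. -/
noncomputable def cCov (n k1 k2 : ℝ) : ℝ :=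
  -8 * (n + 1) * (3 * n - k2 + 2) * (n - k2 - 1) /
    (n * (n - 1) ^ 2 * (k1 + 1) * (k1 + 2) * (k2 + 1) * (k2 + 2) * (k2 + 3) * (k2 + 4))

/-!
Both sums telescope. For fixed `k₁`, `c(n,k₁,k₂)` is the difference in `k₂` of `cCovTail`, which
vanishes at `k₂ = n`; the inner sums therefore collapse to `cCovTail n k₁ (k₁ + 1)`, and
`v(n,k) + 2 · cCovTail n k (k + 1)` is in turn the difference in `k` of `bracketTail`, which also
vanishes at `k = n`.
-/

open Finset

lemma Finset.sum_Ico_sub_succ {M : Type*} [AddCommGroup M] (f : ℕ → M) {m n : ℕ} (h : m ≤ n) :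
    ∑ k ∈ Ico m n, (f k - f (k + 1)) = f m - f n := by
  rw [← neg_sub (f n), ← sum_Ico_sub f h, ← sum_neg_distrib]
  simp only [neg_sub]

noncomputable def cCovTail (n k1 j : ℝ) : ℝ :=
  -8 * (n + 1) * (n - j) * (n - j - 1) /
    (n * (n - 1) ^ 2 * (k1 + 1) * (k1 + 2) * (j + 1) * (j + 2) * (j + 3))

noncomputable def bracketTail (n i : ℝ) : ℝ :=
  4 * (n + 1) * (n - i) * (n - i - 1) * (i - 1) /
    (n * (n - 1) ^ 2 * (i + 1) ^ 2 * (i + 2) * (i + 3))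

lemma cCov_eq_cCovTail_sub (n : ℝ) {k1 k : ℝ} (hk1 : 0 ≤ k1) (hk : 0 ≤ k) :
    cCov n k1 k = cCovTail n k1 k - cCovTail n k1 (k + 1) := by
  rcases eq_or_ne (n * (n - 1) ^ 2) 0 with hn | hn
  · simp [cCov, cCovTail, hn]
  · unfold cCov cCovTail
    field_simp
    ring

lemma vVar_add_cCovTail_eq_bracketTail_sub (n : ℝ) {k : ℝ} (hk : 0 ≤ k) :
    vVar n k + 2 * cCovTail n k (k + 1) = bracketTail n k - bracketTail n (k + 1) := by
  rcases eq_or_ne (n * (n - 1) ^ 2) 0 with hn | hn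
  · simp [vVar, cCovTail, bracketTail, hn]
  · unfold vVar cCovTail bracketTail
    field_simp
    ring

lemma sum_Ico_cCov (n : ℕ) {k1 : ℝ} (hk1 : 0 ≤ k1) {j : ℕ} (hj : j ≤ n) :
    ∑ k ∈ Ico j n, cCov n k1 k = cCovTail n k1 j := by
  have hstep (k : ℕ) : cCov n k1 k = cCovTail n k1 k - cCovTail n k1 ↑(k + 1) := by
    push_cast
    exact cCov_eq_cCovTail_sub n hk1 k.cast_nonneg
  rw [sum_congr rfl fun k _ ↦ hstep k, sum_Ico_sub_succ (fun k : ℕ ↦ cCovTail n k1 k) hj]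
  simp [cCovTail]

lemma sum_Ico_vVar_add_sum_cCov (n : ℕ) {i : ℕ} (hi : i ≤ n) :
    ∑ k ∈ Ico i n, (vVar n k + 2 * ∑ k2 ∈ Ico (k + 1) n, cCov n k k2) = bracketTail n i := by
  have hstep (k : ℕ) (hk : k ∈ Ico i n) :
      vVar n k + 2 * ∑ k2 ∈ Ico (k + 1) n, cCov n k k2
        = bracketTail n k - bracketTail n ↑(k + 1) := by
    rw [sum_Ico_cCov n k.cast_nonneg (mem_Ico.mp hk).2, Nat.cast_succ]
    exact vVar_add_cCovTail_eq_bracketTail_sub n k.cast_nonneg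
  rw [sum_congr rfl hstep, sum_Ico_sub_succ (fun k : ℕ ↦ bracketTail n k) hi]
  simp [bracketTail]

theorem stmt6_general (n i : ℕ) (hn : 4 ≤ n) (hi2 : i ≤ n - 1) :
    (1 / (i : ℝ) ^ 2) *
      ((∑ k ∈ Finset.Icc i (n - 1), vVar n k) +
        2 * ∑ k1 ∈ Finset.Icc i (n - 1), ∑ k2 ∈ Finset.Icc (k1 + 1) (n - 1), cCov n k1 k2) =
    4 * ((n : ℝ) + 1) * ((n : ℝ) - i) * ((n : ℝ) - i - 1) * ((i : ℝ) - 1) /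
      ((n : ℝ) * ((n : ℝ) - 1) ^ 2 * (i : ℝ) ^ 2 * ((i : ℝ) + 1) ^ 2 *
        ((i : ℝ) + 2) * ((i : ℝ) + 3)) := by
  have hIcc (j : ℕ) : Icc j (n - 1) = Ico j n := by
    rw [← Ico_add_one_right_eq_Icc, Nat.sub_add_cancel (by omega)]
  simp only [hIcc]
  rw [mul_sum, ← sum_add_distrib, sum_Ico_vVar_add_sum_cCov n (by omega), bracketTail,
    one_div_mul_eq_div, div_div]
  congr 1
  ring

/-- Closed form for the variance `Var(V_i^{(n)})` of the `i`-th topological weight of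
a Yule tree with `n` tips. -/
theorem stmt6 (n i : ℕ) (hn : 4 ≤ n) (hi1 : 1 ≤ i) (hi2 : i ≤ n - 1) :
    (1 / (i : ℝ) ^ 2) *
      ((∑ k ∈ Finset.Icc i (n - 1), vVar n k) +
        2 * ∑ k1 ∈ Finset.Icc i (n - 1), ∑ k2 ∈ Finset.Icc (k1 + 1) (n - 1), cCov n k1 k2) =
    4 * ((n : ℝ) + 1) * ((n : ℝ) - i) * ((n : ℝ) - i - 1) * ((i : ℝ) - 1) /
      ((n : ℝ) * ((n : ℝ) - 1) ^ 2 * (i : ℝ) ^ 2 * ((i : ℝ) + 1) ^ 2 *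
        ((i : ℝ) + 2) * ((i : ℝ) + 3)) :=
  stmt6_general n i hn hi2
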